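/- Trace of the Bakry–Émery Ricci tensor: if u solves the weighted Monge–Ampère equation and φ := (1/2)(u_{,p} ξ^p + v_q x^q), then at every point of N one has g^{ij} (Ric_φ)_{ij} = (1/4) |u_{,ijk}|²_g; equivalently, s + Δφ = (1/4) |u_{,ijk}|²_g. -/

import Mathlib

open scoped BigOperators
noncomputable section

namespace KRS

variable {n : ℕ}

/-- Partial derivative of `f` in the `i`-th coordinate direction. -/
def pd (i : Fin n) (f : (Fin n → ℝ) → ℝ) : (Fin n → ℝ) → ℝ :=
  fun x => fderiv ℝ f x (Pi.single i 1)

/-- The Hessian matrix `g(x)` of `u`, with entries `g_{ij} = ∂²u/∂x^i∂x^j`. -/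
def hessian (u : (Fin n → ℝ) → ℝ) (x : Fin n → ℝ) : Matrix (Fin n) (Fin n) ℝ :=
  Matrix.of fun i j => pd i (pd j u) x

/-- The inverse matrix `g(x)⁻¹`, with entries `g^{ij}`. -/
def ginv (u : (Fin n → ℝ) → ℝ) (x : Fin n → ℝ) : Matrix (Fin n) (Fin n) ℝ :=
  (hessian u x)⁻¹

/-- Third iterated partial derivative `u_{,ijk}`. -/
def d3 (u : (Fin n → ℝ) → ℝ) (i j k : Fin n) : (Fin n → ℝ) → ℝ :=
  pd i (pd j (pd k u))

/-- Fourth iterated partial derivative `u_{,ijkl}`. -/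
def d4 (u : (Fin n → ℝ) → ℝ) (i j k l : Fin n) : (Fin n → ℝ) → ℝ :=
  pd i (pd j (pd k (pd l u)))

/-- Christoffel symbols `Γ^k_{ij} = (1/2) g^{kl}(∂_i g_{jl} + ∂_j g_{il} − ∂_l g_{ij})`. -/
def Christoffel (u : (Fin n → ℝ) → ℝ) (k i j : Fin n) : (Fin n → ℝ) → ℝ :=
  fun x => (1/2) * ∑ l, ginv u x k l * (d3 u i j l x + d3 u j i l x - d3 u l i j x)

/-- Riemann curvature tensor
`Rm_{ijkl} = g_{is}(∂_k Γ^s_{lj} − ∂_l Γ^s_{kj} + Γ^s_{kp} Γ^p_{lj} − Γ^s_{lp} Γ^p_{kj})`. -/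
def Rm (u : (Fin n → ℝ) → ℝ) (i j k l : Fin n) : (Fin n → ℝ) → ℝ :=
  fun x => ∑ s, hessian u x i s *
    (pd k (Christoffel u s l j) x - pd l (Christoffel u s k j) x
      + ∑ p, Christoffel u s k p x * Christoffel u p l j x
      - ∑ p, Christoffel u s l p x * Christoffel u p k j x)

/-- Ricci tensor `Ric_{ij} = ∂_k Γ^k_{ij} − ∂_j Γ^k_{ik} + Γ^k_{kp} Γ^p_{ij} − Γ^k_{jp} Γ^p_{ik}`. -/
def Ricci (u : (Fin n → ℝ) → ℝ) (i j : Fin n) : (Fin n → ℝ) → ℝ :=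
  fun x => (∑ k, pd k (Christoffel u k i j) x) - (∑ k, pd j (Christoffel u k i k) x)
    + (∑ k, ∑ p, Christoffel u k k p x * Christoffel u p i j x)
    - (∑ k, ∑ p, Christoffel u k j p x * Christoffel u p i k x)

/-- Scalar curvature `s = g^{ij} Ric_{ij}`. -/
def scalarCurv (u : (Fin n → ℝ) → ℝ) : (Fin n → ℝ) → ℝ :=
  fun x => ∑ i, ∑ j, ginv u x i j * Ricci u i j x

/-- Covariant Hessian `(∇²φ)_{ij} = φ_{,ij} − Γ^k_{ij} φ_{,k}`. -/
def covHess (u φ : (Fin n → ℝ) → ℝ) (i j : Fin n) : (Fin n → ℝ) → ℝ :=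
  fun x => pd i (pd j φ) x - ∑ k, Christoffel u k i j x * pd k φ x

/-- Laplace–Beltrami operator `Δφ = g^{ij} (∇²φ)_{ij}`. -/
def laplacian (u φ : (Fin n → ℝ) → ℝ) : (Fin n → ℝ) → ℝ :=
  fun x => ∑ i, ∑ j, ginv u x i j * covHess u φ i j x

/-- Weighted (drift) Laplacian `Δ_φ F = ΔF − g^{ij} φ_{,i} F_{,j}`. -/
def driftLap (u φ F : (Fin n → ℝ) → ℝ) : (Fin n → ℝ) → ℝ :=
  fun x => laplacian u F x - ∑ i, ∑ j, ginv u x i j * pd i φ x * pd j F x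

/-- Bakry–Émery Ricci tensor `(Ric_φ)_{ij} = Ric_{ij} + (∇²φ)_{ij}`. -/
def ricciPhi (u φ : (Fin n → ℝ) → ℝ) (i j : Fin n) : (Fin n → ℝ) → ℝ :=
  fun x => Ricci u i j x + covHess u φ i j x

/-- Pointwise squared `g`-norm of the third derivative tensor:
`|u_{,ijk}|²_g = g^{ip} g^{jq} g^{kr} u_{,ijk} u_{,pqr}`. -/
def norm3 (u : (Fin n → ℝ) → ℝ) : (Fin n → ℝ) → ℝ :=
  fun x => ∑ i, ∑ j, ∑ k, ∑ p, ∑ q, ∑ r,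
    ginv u x i p * ginv u x j q * ginv u x k r * d3 u i j k x * d3 u p q r x

/-- The canonical weight function `φ = (1/2)(u_{,p} ξ^p + v_q x^q)`. -/
def weight (u : (Fin n → ℝ) → ℝ) (ξ v : Fin n → ℝ) : (Fin n → ℝ) → ℝ :=
  fun x => (1/2) * ((∑ p, pd p u x * ξ p) + ∑ q, v q * x q)

/-- `u` solves the weighted Monge–Ampère equation
`log det g(x) = −v_p x^p + u_{,q}(x) ξ^q + c` on `N`. -/
def MAeq (u : (Fin n → ℝ) → ℝ) (N : Set (Fin n → ℝ)) (v ξ : Fin n → ℝ) (c : ℝ) : Prop :=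
  ∀ x ∈ N, Real.log (hessian u x).det = -(∑ p, v p * x p) + (∑ q, pd q u x * ξ q) + c

/-- Covariant derivative of the third derivative tensor:
`(∇T)_{lijk} = u_{,ijkl} − Γ^s_{li} u_{,sjk} − Γ^s_{lj} u_{,isk} − Γ^s_{lk} u_{,ijs}`. -/
def covT (u : (Fin n → ℝ) → ℝ) (l i j k : Fin n) : (Fin n → ℝ) → ℝ :=
  fun x => d4 u i j k l x - (∑ s, Christoffel u s l i x * d3 u s j k x)
    - (∑ s, Christoffel u s l j x * d3 u i s k x)
    - (∑ s, Christoffel u s l k x * d3 u i j s x)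

/-- Completeness of the Hessian metric `g = D²u` on `N`: every C¹ curve
`γ : [0,1) → N` that eventually leaves every compact subset of `N`
has infinite `g`-length. -/
def HessComplete (u : (Fin n → ℝ) → ℝ) (N : Set (Fin n → ℝ)) : Prop :=
  ∀ γ : ℝ → (Fin n → ℝ),
    ContDiffOn ℝ 1 γ (Set.Ico (0:ℝ) 1) →
    (∀ t ∈ Set.Ico (0:ℝ) 1, γ t ∈ N) →
    (∀ K : Set (Fin n → ℝ), IsCompact K → K ⊆ N →
      ∃ tK ∈ Set.Ico (0:ℝ) 1, ∀ t ∈ Set.Ioo tK 1, γ t ∉ K) →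
    ∫⁻ t in Set.Ioo (0:ℝ) 1,
      ENNReal.ofReal (Real.sqrt (∑ i, ∑ j,
        hessian u (γ t) i j * deriv γ t i * deriv γ t j)) = ⊤



-- ### auxiliary lemmas ###
section Aux
variable {N : Set (Fin n → ℝ)}

lemma pd_congr_nhds {f g : (Fin n → ℝ) → ℝ} {x : Fin n → ℝ} (h : f =ᶠ[nhds x] g) (i : Fin n) :
    pd i f x = pd i g x := by unfold pd; rw [h.fderiv_eq]

lemma pd_congr (hN : IsOpen N) {x : Fin n → ℝ} (hx : x ∈ N)
    {f g : (Fin n → ℝ) → ℝ} (h : ∀ y ∈ N, f y = g y) (i : Fin n) : pd i f x = pd i g x :=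
  pd_congr_nhds (Filter.eventuallyEq_of_mem (hN.mem_nhds hx) h) i

lemma diffAt (hN : IsOpen N) {f : (Fin n → ℝ) → ℝ} (hf : ContDiffOn ℝ (⊤ : ℕ∞) f N)
    {x : Fin n → ℝ} (hx : x ∈ N) : DifferentiableAt ℝ f x :=
  (hf.contDiffAt (hN.mem_nhds hx)).differentiableAt (by simp)

lemma contDiffOn_pd (hN : IsOpen N) {f : (Fin n → ℝ) → ℝ} (hf : ContDiffOn ℝ (⊤ : ℕ∞) f N) (i : Fin n) :
    ContDiffOn ℝ (⊤ : ℕ∞) (pd i f) N := by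
  have h1 : ContDiffOn ℝ (⊤ : ℕ∞) (fun x => fderiv ℝ f x) N := hf.fderiv_of_isOpen hN (by simp)
  exact (ContinuousLinearMap.apply ℝ ℝ (Pi.single i 1)).contDiff.comp_contDiffOn h1

lemma pd_add {f g : (Fin n → ℝ) → ℝ} {x : Fin n → ℝ} (hf : DifferentiableAt ℝ f x)
    (hg : DifferentiableAt ℝ g x) (i : Fin n) :
    pd i (fun y => f y + g y) x = pd i f x + pd i g x := by
  unfold pd; rw [fderiv_fun_add hf hg]; rfl

lemma pd_sub {f g : (Fin n → ℝ) → ℝ} {x : Fin n → ℝ} (hf : DifferentiableAt ℝ f x)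
    (hg : DifferentiableAt ℝ g x) (i : Fin n) :
    pd i (fun y => f y - g y) x = pd i f x - pd i g x := by
  unfold pd; rw [fderiv_fun_sub hf hg]; rfl

lemma pd_mul {f g : (Fin n → ℝ) → ℝ} {x : Fin n → ℝ} (hf : DifferentiableAt ℝ f x)
    (hg : DifferentiableAt ℝ g x) (i : Fin n) :
    pd i (fun y => f y * g y) x = pd i f x * g x + f x * pd i g x := by
  unfold pd; rw [fderiv_fun_mul hf hg]
  simp [mul_comm]
  ring

lemma pd_const (c : ℝ) (x : Fin n → ℝ) (i : Fin n) : pd i (fun _ => c) x = 0 := by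
  unfold pd; rw [fderiv_const_apply]; rfl

lemma pd_const_mul {f : (Fin n → ℝ) → ℝ} {x : Fin n → ℝ} (hf : DifferentiableAt ℝ f x)
    (c : ℝ) (i : Fin n) : pd i (fun y => c * f y) x = c * pd i f x := by
  unfold pd; rw [fderiv_const_mul hf]; rfl

lemma pd_mul_const {f : (Fin n → ℝ) → ℝ} {x : Fin n → ℝ} (hf : DifferentiableAt ℝ f x)
    (c : ℝ) (i : Fin n) : pd i (fun y => f y * c) x = pd i f x * c := by
  unfold pd; rw [fderiv_mul_const hf]; simp [mul_comm]

lemma pd_sum {ι : Type*} {s : Finset ι} {f : ι → (Fin n → ℝ) → ℝ} {x : Fin n → ℝ}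
    (hf : ∀ a ∈ s, DifferentiableAt ℝ (f a) x) (i : Fin n) :
    pd i (fun y => ∑ a ∈ s, f a y) x = ∑ a ∈ s, pd i (f a) x := by
  unfold pd; rw [fderiv_fun_sum hf]; simp

lemma pd_neg {f : (Fin n → ℝ) → ℝ} {x : Fin n → ℝ} (i : Fin n) :
    pd i (fun y => -f y) x = -pd i f x := by
  unfold pd; rw [fderiv_fun_neg]; rfl

lemma pd_coord (x : Fin n → ℝ) (i q : Fin n) :
    pd i (fun y => y q) x = if q = i then 1 else 0 := by
  have : (fun y : Fin n → ℝ => y q) = (ContinuousLinearMap.proj q : (Fin n → ℝ) →L[ℝ] ℝ) := rfl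
  unfold pd; rw [this, ContinuousLinearMap.fderiv]
  simp [Pi.single_apply]

lemma pd_comm (hN : IsOpen N) {f : (Fin n → ℝ) → ℝ} (hf : ContDiffOn ℝ (⊤ : ℕ∞) f N)
    {x : Fin n → ℝ} (hx : x ∈ N) (i j : Fin n) :
    pd i (pd j f) x = pd j (pd i f) x := by
  have hev : ∀ᶠ y in nhds x, HasFDerivAt f (fderiv ℝ f y) y := by
    filter_upwards [hN.mem_nhds hx] with y hy
    exact (diffAt hN hf hy).hasFDerivAt
  have hd : DifferentiableAt ℝ (fderiv ℝ f) x :=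
    (((hf.fderiv_of_isOpen hN ((by exact_mod_cast (le_top : (⊤ : ℕ∞) + 1 ≤ ⊤)) : ((⊤ : ℕ∞) : WithTop ℕ∞) + 1 ≤ ((⊤ : ℕ∞) : WithTop ℕ∞)))).contDiffAt (hN.mem_nhds hx)).differentiableAt (by simp)
  have hsym := second_derivative_symmetric_of_eventually hev hd.hasFDerivAt
    (Pi.single i 1) (Pi.single j 1)
  have key : ∀ v w : Fin n → ℝ,
      fderiv ℝ (fun y => fderiv ℝ f y w) x v = (fderiv ℝ (fderiv ℝ f) x v) w := by
    intro v w
    rw [fderiv_clm_apply hd (differentiableAt_const w)]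
    simp
  show fderiv ℝ (fun y => fderiv ℝ f y (Pi.single j 1)) x (Pi.single i 1)
      = fderiv ℝ (fun y => fderiv ℝ f y (Pi.single i 1)) x (Pi.single j 1)
  rw [key, key, hsym]


end Aux

section Aux2
variable {N : Set (Fin n → ℝ)}

lemma cd_prod {ι : Type*} (hN : IsOpen N) (s : Finset ι) (f : ι → (Fin n → ℝ) → ℝ)
    (hf : ∀ a ∈ s, ContDiffOn ℝ (⊤ : ℕ∞) (f a) N) :
    ContDiffOn ℝ (⊤ : ℕ∞) (fun y => ∏ a ∈ s, f a y) N := by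
  classical
  induction s using Finset.induction_on with
  | empty => simpa using contDiffOn_const
  | @insert a s ha ih =>
      simp only [Finset.prod_insert ha]
      exact (hf a (Finset.mem_insert_self a s)).mul
        (ih fun b hb => hf b (Finset.mem_insert_of_mem hb))

lemma pd_prod {ι : Type*} [DecidableEq ι] (hN : IsOpen N) {x : Fin n → ℝ} (hx : x ∈ N) (s : Finset ι)
    (f : ι → (Fin n → ℝ) → ℝ) (hf : ∀ a ∈ s, ContDiffOn ℝ (⊤ : ℕ∞) (f a) N) (i : Fin n) :
    pd i (fun y => ∏ a ∈ s, f a y) x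
      = ∑ a ∈ s, pd i (f a) x * ∏ b ∈ s.erase a, f b x := by
  classical
  induction s using Finset.induction_on with
  | empty => simpa using pd_const 1 x i
  | @insert a s ha ih =>
      have hfa : DifferentiableAt ℝ (f a) x :=
        diffAt hN (hf a (Finset.mem_insert_self a s)) hx
      have hfs : ∀ b ∈ s, ContDiffOn ℝ (⊤ : ℕ∞) (f b) N :=
        fun b hb => hf b (Finset.mem_insert_of_mem hb)
      have hps : DifferentiableAt ℝ (fun y => ∏ b ∈ s, f b y) x :=
        diffAt hN (cd_prod hN s f hfs) hx
      have step : pd i (fun y => ∏ b ∈ insert a s, f b y) x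
          = pd i (f a) x * (∏ b ∈ s, f b x) + f a x * pd i (fun y => ∏ b ∈ s, f b y) x := by
        have : (fun y => ∏ b ∈ insert a s, f b y)
            = fun y => f a y * ∏ b ∈ s, f b y := by
          funext y; exact Finset.prod_insert ha
        rw [this, pd_mul hfa hps]
      rw [step, ih hfs, Finset.sum_insert ha, Finset.erase_insert ha, Finset.mul_sum]
      congr 1
      apply Finset.sum_congr rfl
      intro b hb
      have hab : a ≠ b := fun h => ha (h ▸ hb)
      have h1 : (insert a s).erase b = insert a (s.erase b) :=
        Finset.erase_insert_of_ne hab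
      have h2 : a ∉ s.erase b := fun h => ha (Finset.mem_of_mem_erase h)
      rw [h1, Finset.prod_insert h2]
      ring

lemma cd_det (hN : IsOpen N) {M : (Fin n → ℝ) → Matrix (Fin n) (Fin n) ℝ}
    (hM : ∀ a b, ContDiffOn ℝ (⊤ : ℕ∞) (fun y => M y a b) N) :
    ContDiffOn ℝ (⊤ : ℕ∞) (fun y => (M y).det) N := by
  classical
  have : (fun y => (M y).det)
      = fun y => ∑ σ : Equiv.Perm (Fin n), ((Equiv.Perm.sign σ : ℤ) : ℝ) * ∏ a, M y (σ a) a := by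
    funext y; rw [Matrix.det_apply']
  rw [this]
  apply ContDiffOn.sum
  intro σ _
  exact contDiffOn_const.mul (cd_prod hN Finset.univ _ fun a _ => hM (σ a) a)

lemma pd_det (hN : IsOpen N) {x : Fin n → ℝ} (hx : x ∈ N)
    {M : (Fin n → ℝ) → Matrix (Fin n) (Fin n) ℝ}
    (hM : ∀ a b, ContDiffOn ℝ (⊤ : ℕ∞) (fun y => M y a b) N) (k : Fin n) :
    pd k (fun y => (M y).det) x
      = ∑ c, ∑ a, (M x).adjugate c a * pd k (fun y => M y a c) x := by
  classical
  have hrw : (fun y => (M y).det)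
      = fun y => ∑ σ : Equiv.Perm (Fin n), ((Equiv.Perm.sign σ : ℤ) : ℝ) * ∏ a, M y (σ a) a := by
    funext y; rw [Matrix.det_apply']
  rw [hrw]
  rw [pd_sum (fun σ _ => (diffAt hN (contDiffOn_const.mul
    (cd_prod hN Finset.univ _ fun a _ => hM (σ a) a)) hx)) k]
  have hterm : ∀ σ : Equiv.Perm (Fin n),
      pd k (fun y => ((Equiv.Perm.sign σ : ℤ) : ℝ) * ∏ a, M y (σ a) a) x
        = ((Equiv.Perm.sign σ : ℤ) : ℝ)
          * ∑ c, pd k (fun y => M y (σ c) c) x * ∏ b ∈ Finset.univ.erase c, M x (σ b) b := by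
    intro σ
    rw [pd_const_mul (diffAt hN (cd_prod hN Finset.univ _ fun a _ => hM (σ a) a) hx)]
    rw [pd_prod hN hx Finset.univ _ (fun a _ => hM (σ a) a) k]
  simp only [hterm]
  -- now: ∑ σ, ε σ * ∑ c, pd(entry) * ∏_{erase c} = ∑ c ∑ a adjugate c a * pd(entry a c)
  have key : ∀ c : Fin n,
      ((M x).updateCol c (fun a => pd k (fun y => M y a c) x)).det
        = ∑ σ : Equiv.Perm (Fin n), ((Equiv.Perm.sign σ : ℤ) : ℝ)
            * (pd k (fun y => M y (σ c) c) x * ∏ b ∈ Finset.univ.erase c, M x (σ b) b) := by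
    intro c
    rw [Matrix.det_apply']
    apply Finset.sum_congr rfl
    intro σ _
    congr 1
    rw [← Finset.mul_prod_erase Finset.univ _ (Finset.mem_univ c)]
    rw [Matrix.updateCol_apply]
    simp only [if_pos rfl]
    congr 1
    apply Finset.prod_congr rfl
    intro b hb
    rw [Matrix.updateCol_apply, if_neg (Finset.ne_of_mem_erase hb)]
  have key2 : ∀ c : Fin n,
      ((M x).updateCol c (fun a => pd k (fun y => M y a c) x)).det
        = ∑ a, (M x).adjugate c a * pd k (fun y => M y a c) x := by
    intro c
    rw [← Matrix.cramer_apply, Matrix.cramer_eq_adjugate_mulVec]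
    simp [Matrix.mulVec, dotProduct]
  calc (∑ σ : Equiv.Perm (Fin n), ((Equiv.Perm.sign σ : ℤ) : ℝ)
          * ∑ c, pd k (fun y => M y (σ c) c) x * ∏ b ∈ Finset.univ.erase c, M x (σ b) b)
      = ∑ σ : Equiv.Perm (Fin n), ∑ c, ((Equiv.Perm.sign σ : ℤ) : ℝ)
          * (pd k (fun y => M y (σ c) c) x * ∏ b ∈ Finset.univ.erase c, M x (σ b) b) := by
        apply Finset.sum_congr rfl; intro σ _; rw [Finset.mul_sum]
    _ = ∑ c, ∑ σ : Equiv.Perm (Fin n), ((Equiv.Perm.sign σ : ℤ) : ℝ)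
          * (pd k (fun y => M y (σ c) c) x * ∏ b ∈ Finset.univ.erase c, M x (σ b) b) :=
        Finset.sum_comm
    _ = ∑ c, ∑ a, (M x).adjugate c a * pd k (fun y => M y a c) x := by
        apply Finset.sum_congr rfl; intro c _; rw [← key c, key2 c]

lemma pd_log {F : (Fin n → ℝ) → ℝ} {x : Fin n → ℝ} (hF : DifferentiableAt ℝ F x)
    (h0 : F x ≠ 0) (k : Fin n) :
    pd k (fun y => Real.log (F y)) x = (F x)⁻¹ * pd k F x := by
  have h := (Real.hasDerivAt_log h0).comp_hasFDerivAt x hF.hasFDerivAt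
  have heq : (fun y => Real.log (F y)) = Real.log ∘ F := rfl
  show fderiv ℝ (fun y => Real.log (F y)) x (Pi.single k 1) = _
  rw [heq, h.fderiv]
  simp [pd]

end Aux2

section Aux3
variable {N : Set (Fin n → ℝ)} {u : (Fin n → ℝ) → ℝ} {x : Fin n → ℝ}

lemma cd_hess (hN : IsOpen N) (hu : ContDiffOn ℝ (⊤ : ℕ∞) u N) (a b : Fin n) :
    ContDiffOn ℝ (⊤ : ℕ∞) (fun y => hessian u y a b) N :=
  contDiffOn_pd hN (contDiffOn_pd hN hu b) a

lemma cd_d3 (hN : IsOpen N) (hu : ContDiffOn ℝ (⊤ : ℕ∞) u N) (a b c : Fin n) :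
    ContDiffOn ℝ (⊤ : ℕ∞) (d3 u a b c) N :=
  contDiffOn_pd hN (contDiffOn_pd hN (contDiffOn_pd hN hu c) b) a

lemma cd_detg (hN : IsOpen N) (hu : ContDiffOn ℝ (⊤ : ℕ∞) u N) :
    ContDiffOn ℝ (⊤ : ℕ∞) (fun y => (hessian u y).det) N :=
  cd_det hN (cd_hess hN hu)

lemma ginv_eq (u : (Fin n → ℝ) → ℝ) (x : Fin n → ℝ) (i j : Fin n) :
    ginv u x i j = ((hessian u x).det)⁻¹ * (hessian u x).adjugate i j := by
  show (hessian u x)⁻¹ i j = _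
  rw [Matrix.inv_def]
  simp [Ring.inverse_eq_inv']

lemma cd_adj (hN : IsOpen N) (hu : ContDiffOn ℝ (⊤ : ℕ∞) u N) (i j : Fin n) :
    ContDiffOn ℝ (⊤ : ℕ∞) (fun y => (hessian u y).adjugate i j) N := by
  have : (fun y => (hessian u y).adjugate i j)
      = fun y => ((hessian u y).updateRow j (Pi.single i 1)).det := by
    funext y; rw [Matrix.adjugate_apply]
  rw [this]
  apply cd_det hN
  intro a b
  by_cases haj : a = j
  · simp only [Matrix.updateRow_apply, haj, if_pos rfl]
    exact contDiffOn_const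
  · simp only [Matrix.updateRow_apply, if_neg haj]
    exact cd_hess hN hu a b

lemma cd_ginv (hN : IsOpen N) (hu : ContDiffOn ℝ (⊤ : ℕ∞) u N)
    (hpos : ∀ y ∈ N, (hessian u y).PosDef) (i j : Fin n) :
    ContDiffOn ℝ (⊤ : ℕ∞) (fun y => ginv u y i j) N := by
  have : (fun y => ginv u y i j)
      = fun y => ((hessian u y).det)⁻¹ * (hessian u y).adjugate i j := by
    funext y; exact ginv_eq u y i j
  rw [this]
  exact ((cd_detg hN hu).inv (fun y hy => (hpos y hy).det_pos.ne')).mul (cd_adj hN hu i j)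

-- symmetry lemmas
lemma hess_symm (hN : IsOpen N) (hu : ContDiffOn ℝ (⊤ : ℕ∞) u N) (hx : x ∈ N) (i j : Fin n) :
    hessian u x i j = hessian u x j i :=
  pd_comm hN hu hx i j

lemma d3_swap12 (hN : IsOpen N) (hu : ContDiffOn ℝ (⊤ : ℕ∞) u N) (hx : x ∈ N) (i j k : Fin n) :
    d3 u i j k x = d3 u j i k x :=
  pd_comm hN (contDiffOn_pd hN hu k) hx i j

lemma d3_swap23 (hN : IsOpen N) (hu : ContDiffOn ℝ (⊤ : ℕ∞) u N) (hx : x ∈ N) (i j k : Fin n) :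
    d3 u i j k x = d3 u i k j x :=
  pd_congr hN hx (fun y hy => pd_comm hN hu hy j k) i

lemma d4_swap12 (hN : IsOpen N) (hu : ContDiffOn ℝ (⊤ : ℕ∞) u N) (hx : x ∈ N) (i j k l : Fin n) :
    d4 u i j k l x = d4 u j i k l x :=
  pd_comm hN (contDiffOn_pd hN (contDiffOn_pd hN hu l) k) hx i j

lemma d4_swap23 (hN : IsOpen N) (hu : ContDiffOn ℝ (⊤ : ℕ∞) u N) (hx : x ∈ N) (i j k l : Fin n) :
    d4 u i j k l x = d4 u i k j l x :=
  pd_congr hN hx (fun y hy => pd_comm hN (contDiffOn_pd hN hu l) hy j k) i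

lemma d4_swap34 (hN : IsOpen N) (hu : ContDiffOn ℝ (⊤ : ℕ∞) u N) (hx : x ∈ N) (i j k l : Fin n) :
    d4 u i j k l x = d4 u i j l k x :=
  pd_congr hN hx (fun y hy => pd_congr hN hy (fun z hz => pd_comm hN hu hz k l) j) i

lemma ginv_mul_hess (hpos : ∀ y ∈ N, (hessian u y).PosDef) (hx : x ∈ N) (i j : Fin n) :
    (∑ l, ginv u x i l * hessian u x l j) = if i = j then (1:ℝ) else 0 := by
  have hdet : IsUnit (hessian u x).det := isUnit_iff_ne_zero.mpr (hpos x hx).det_pos.ne'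
  have h := Matrix.nonsing_inv_mul (hessian u x) hdet
  have h2 := congrFun (congrFun h i) j
  have h3 : (∑ l, ginv u x i l * hessian u x l j)
      = ((hessian u x)⁻¹ * hessian u x) i j := (Matrix.mul_apply).symm
  rw [h3, h, Matrix.one_apply]

lemma ginv_symm (hN : IsOpen N) (hu : ContDiffOn ℝ (⊤ : ℕ∞) u N) (hx : x ∈ N) (i j : Fin n) :
    ginv u x i j = ginv u x j i := by
  have hsym : (hessian u x).transpose = hessian u x :=
    Matrix.ext fun a b => hess_symm hN hu hx b a
  show (hessian u x)⁻¹ i j = (hessian u x)⁻¹ j i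
  calc (hessian u x)⁻¹ i j = ((hessian u x).transpose)⁻¹ i j := by rw [hsym]
    _ = ((hessian u x)⁻¹).transpose i j := by rw [Matrix.transpose_nonsing_inv]
    _ = (hessian u x)⁻¹ j i := rfl

end Aux3

section Aux4
variable {N : Set (Fin n → ℝ)} {u : (Fin n → ℝ) → ℝ} {x : Fin n → ℝ}

lemma hess_mul_ginv (hpos : ∀ y ∈ N, (hessian u y).PosDef) (hx : x ∈ N) (i j : Fin n) :
    (∑ l, hessian u x i l * ginv u x l j) = if i = j then (1:ℝ) else 0 := by
  have hdet : IsUnit (hessian u x).det := isUnit_iff_ne_zero.mpr (hpos x hx).det_pos.ne'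
  have h := Matrix.mul_nonsing_inv (hessian u x) hdet
  have h3 : (∑ l, hessian u x i l * ginv u x l j)
      = (hessian u x * (hessian u x)⁻¹) i j := (Matrix.mul_apply).symm
  rw [h3, h, Matrix.one_apply]

lemma pd_ginv (hN : IsOpen N) (hu : ContDiffOn ℝ (⊤ : ℕ∞) u N)
    (hpos : ∀ y ∈ N, (hessian u y).PosDef) (hx : x ∈ N) (k i m : Fin n) :
    pd k (fun y => ginv u y i m) x
      = -∑ a, ∑ b, ginv u x i a * d3 u k a b x * ginv u x b m := by
  have hdg : ∀ a b : Fin n, DifferentiableAt ℝ (fun y => ginv u y a b) x :=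
    fun a b => diffAt hN (cd_ginv hN hu hpos a b) hx
  have hdh : ∀ a b : Fin n, DifferentiableAt ℝ (fun y => hessian u y a b) x :=
    fun a b => diffAt hN (cd_hess hN hu a b) hx
  have hkey : ∀ j : Fin n,
      (∑ l, pd k (fun y => ginv u y i l) x * hessian u x l j)
        = -∑ l, ginv u x i l * d3 u k l j x := by
    intro j
    have h0 : pd k (fun y => ∑ l, ginv u y i l * hessian u y l j) x = 0 := by
      rw [pd_congr hN hx (fun y hy => ginv_mul_hess hpos hy i j) k, pd_const]
    rw [pd_sum (fun l _ => ((hdg i l).fun_mul (hdh l j))) k] at h0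
    have h1 : ∀ l : Fin n, pd k (fun y => ginv u y i l * hessian u y l j) x
        = pd k (fun y => ginv u y i l) x * hessian u x l j + ginv u x i l * d3 u k l j x :=
      fun l => pd_mul (hdg i l) (hdh l j) k
    rw [Finset.sum_congr rfl (fun l _ => h1 l), Finset.sum_add_distrib] at h0
    linarith [h0]
  have hgG := hess_mul_ginv hpos hx
  calc pd k (fun y => ginv u y i m) x
      = ∑ l, pd k (fun y => ginv u y i l) x * (if l = m then (1:ℝ) else 0) := by
        simp only [mul_ite, mul_one, mul_zero, Finset.sum_ite_eq', Finset.mem_univ, if_true]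
    _ = ∑ l, pd k (fun y => ginv u y i l) x * (∑ j, hessian u x l j * ginv u x j m) := by
        apply Finset.sum_congr rfl; intro l _; rw [hgG l m]
    _ = ∑ j, (∑ l, pd k (fun y => ginv u y i l) x * hessian u x l j) * ginv u x j m := by
        simp only [Finset.mul_sum]
        rw [Finset.sum_comm]
        apply Finset.sum_congr rfl; intro j _
        rw [Finset.sum_mul]
        apply Finset.sum_congr rfl; intro l _
        ring
    _ = ∑ j, ∑ l, -(ginv u x i l * d3 u k l j x * ginv u x j m) := by
        apply Finset.sum_congr rfl; intro j _
        rw [hkey j, neg_mul, Finset.sum_mul, ← Finset.sum_neg_distrib]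
    _ = -∑ a, ∑ b, ginv u x i a * d3 u k a b x * ginv u x b m := by
        rw [Finset.sum_comm]
        simp [Finset.sum_neg_distrib]

lemma trace_rel (hN : IsOpen N) (hu : ContDiffOn ℝ (⊤ : ℕ∞) u N)
    (hpos : ∀ y ∈ N, (hessian u y).PosDef) {v ξ : Fin n → ℝ} {c : ℝ}
    (hMA : MAeq u N v ξ c) (hx : x ∈ N) (l : Fin n) :
    (∑ a, ∑ b, ginv u x a b * d3 u a b l x) = -v l + ∑ q, hessian u x l q * ξ q := by
  have hdet : (hessian u x).det ≠ 0 := (hpos x hx).det_pos.ne'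
  have hdh : ∀ a b : Fin n, DifferentiableAt ℝ (fun y => hessian u y a b) x :=
    fun a b => diffAt hN (cd_hess hN hu a b) hx
  have hdu : ∀ q : Fin n, DifferentiableAt ℝ (pd q u) x :=
    fun q => diffAt hN (contDiffOn_pd hN hu q) hx
  -- left side
  have hL : pd l (fun y => Real.log ((hessian u y).det)) x
      = ∑ a, ∑ b, ginv u x a b * d3 u a b l x := by
    rw [pd_log (diffAt hN (cd_detg hN hu) hx) hdet l]
    rw [pd_det hN hx (cd_hess hN hu) l]
    rw [Finset.mul_sum]
    apply Finset.sum_congr rfl; intro a _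
    rw [Finset.mul_sum]
    apply Finset.sum_congr rfl; intro b _
    have h1 : pd l (fun y => hessian u y b a) x = d3 u l b a x := rfl
    rw [h1, ← mul_assoc, ← ginv_eq]
    have h2 : d3 u l b a x = d3 u a b l x := by
      rw [d3_swap12 hN hu hx, d3_swap23 hN hu hx, d3_swap12 hN hu hx, d3_swap23 hN hu hx]
    rw [h2]
  -- right side
  have hR : pd l (fun y => -(∑ p, v p * y p) + (∑ q, pd q u y * ξ q) + c) x
      = -v l + ∑ q, hessian u x l q * ξ q := by
    have hproj : ∀ p : Fin n, DifferentiableAt ℝ (fun z : Fin n → ℝ => z p) x :=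
      fun p => (ContinuousLinearMap.proj p : (Fin n → ℝ) →L[ℝ] ℝ).differentiableAt
    have hvp : ∀ p : Fin n, DifferentiableAt ℝ (fun z : Fin n → ℝ => v p * z p) x :=
      fun p => (hproj p).const_mul _
    have d1 : DifferentiableAt ℝ (fun y : Fin n → ℝ => -(∑ p, v p * y p)) x :=
      (DifferentiableAt.fun_sum (fun p _ => hvp p)).fun_neg
    have d2 : DifferentiableAt ℝ (fun y => ∑ q, pd q u y * ξ q) x :=
      DifferentiableAt.fun_sum (fun q _ => (hdu q).mul_const _)
    have e1 : pd l (fun y : Fin n → ℝ => -(∑ p, v p * y p)) x = -v l := by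
      rw [pd_neg]
      rw [pd_sum (f := fun p (z : Fin n → ℝ) => v p * z p) (fun p _ => hvp p) l]
      have hterm : ∀ p : Fin n, pd l (fun z : Fin n → ℝ => v p * z p) x
          = v p * (if p = l then 1 else 0) := by
        intro p
        rw [pd_const_mul (hproj p), pd_coord]
      rw [Finset.sum_congr rfl (fun p _ => hterm p)]
      simp
    have e2 : pd l (fun y => ∑ q, pd q u y * ξ q) x = ∑ q, hessian u x l q * ξ q := by
      rw [pd_sum (fun q _ => (hdu q).mul_const _) l]
      apply Finset.sum_congr rfl; intro q _
      rw [pd_mul_const (hdu q) (ξ q)]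
      rfl
    rw [show (fun y => -(∑ p, v p * y p) + (∑ q, pd q u y * ξ q) + c)
        = (fun y => (-(∑ p, v p * y p) + (∑ q, pd q u y * ξ q)) + c) from rfl]
    rw [pd_add (d1.fun_add d2) (differentiableAt_const c), pd_const, pd_add d1 d2, e1, e2]
    ring
  rw [← hL, pd_congr hN hx (fun y hy => hMA y hy) l, hR]

end Aux4

section Aux5
variable {N : Set (Fin n → ℝ)} {u : (Fin n → ℝ) → ℝ} {x : Fin n → ℝ}

lemma d3_comb (hN : IsOpen N) (hu : ContDiffOn ℝ (⊤ : ℕ∞) u N) (hx : x ∈ N) (i j l : Fin n) :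
    d3 u i j l x + d3 u j i l x - d3 u l i j x = d3 u i j l x := by
  have h1 : d3 u j i l x = d3 u i j l x := d3_swap12 hN hu hx j i l
  have h2 : d3 u l i j x = d3 u i j l x := by
    rw [d3_swap12 hN hu hx, d3_swap23 hN hu hx]
  rw [h1, h2]; ring

lemma christoffel_val (hN : IsOpen N) (hu : ContDiffOn ℝ (⊤ : ℕ∞) u N) (hx : x ∈ N) (s i j : Fin n) :
    Christoffel u s i j x = (1/2) * ∑ l, ginv u x s l * d3 u i j l x := by
  show (1/2) * (∑ l, ginv u x s l * (d3 u i j l x + d3 u j i l x - d3 u l i j x)) = _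
  congr 1
  apply Finset.sum_congr rfl; intro l _
  rw [d3_comb hN hu hx]

lemma pd_christoffel (hN : IsOpen N) (hu : ContDiffOn ℝ (⊤ : ℕ∞) u N)
    (hpos : ∀ y ∈ N, (hessian u y).PosDef) (hx : x ∈ N) (k s i j : Fin n) :
    pd k (Christoffel u s i j) x
      = (1/2) * ∑ l, ((-∑ a, ∑ b, ginv u x s a * d3 u k a b x * ginv u x b l) * d3 u i j l x
          + ginv u x s l * d4 u k i j l x) := by
  have hdg : ∀ a b : Fin n, DifferentiableAt ℝ (fun y => ginv u y a b) x :=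
    fun a b => diffAt hN (cd_ginv hN hu hpos a b) hx
  have hd3 : ∀ a b c : Fin n, DifferentiableAt ℝ (d3 u a b c) x :=
    fun a b c => diffAt hN (cd_d3 hN hu a b c) hx
  have hcomb : ∀ l : Fin n, DifferentiableAt ℝ
      (fun y => d3 u i j l y + d3 u j i l y - d3 u l i j y) x :=
    fun l => ((hd3 i j l).add (hd3 j i l)).sub (hd3 l i j)
  have hterm : ∀ l : Fin n, DifferentiableAt ℝ
      (fun y => ginv u y s l * (d3 u i j l y + d3 u j i l y - d3 u l i j y)) x :=
    fun l => (hdg s l).mul (hcomb l)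
  have h0 : pd k (Christoffel u s i j) x
      = (1/2) * pd k (fun y => ∑ l, ginv u y s l
          * (d3 u i j l y + d3 u j i l y - d3 u l i j y)) x := by
    show pd k (fun y => (1/2) * ∑ l, ginv u y s l
        * (d3 u i j l y + d3 u j i l y - d3 u l i j y)) x = _
    rw [pd_const_mul (DifferentiableAt.fun_sum (fun l _ => hterm l))]
  rw [h0, pd_sum (fun l _ => hterm l) k]
  congr 1
  apply Finset.sum_congr rfl; intro l _
  rw [pd_mul (hdg s l) (hcomb l)]
  rw [pd_ginv hN hu hpos hx k s l]
  have hc1 : pd k (fun y => d3 u i j l y + d3 u j i l y - d3 u l i j y) x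
      = d4 u k i j l x + d4 u k j i l x - d4 u k l i j x := by
    rw [pd_sub ((hd3 i j l).fun_add (hd3 j i l)) (hd3 l i j),
       pd_add (hd3 i j l) (hd3 j i l)]
    rfl
  rw [hc1]
  have h2 : d4 u k j i l x = d4 u k i j l x := d4_swap23 hN hu hx k j i l
  have h3 : d4 u k l i j x = d4 u k i j l x := by
    rw [d4_swap23 hN hu hx, d4_swap34 hN hu hx]
  rw [h2, h3, d3_comb hN hu hx]
  ring

lemma pd_weight (hN : IsOpen N) (hu : ContDiffOn ℝ (⊤ : ℕ∞) u N) {ξ v : Fin n → ℝ}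
    {y : Fin n → ℝ} (hy : y ∈ N) (k : Fin n) :
    pd k (weight u ξ v) y = (1/2) * ((∑ p, hessian u y k p * ξ p) + v k) := by
  have hdu : ∀ q : Fin n, DifferentiableAt ℝ (pd q u) y :=
    fun q => diffAt hN (contDiffOn_pd hN hu q) hy
  have hproj : ∀ p : Fin n, DifferentiableAt ℝ (fun z : Fin n → ℝ => z p) y :=
    fun p => (ContinuousLinearMap.proj p : (Fin n → ℝ) →L[ℝ] ℝ).differentiableAt
  have hvp : ∀ p : Fin n, DifferentiableAt ℝ (fun z : Fin n → ℝ => v p * z p) y :=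
    fun p => (hproj p).const_mul _
  have d1 : DifferentiableAt ℝ (fun z => ∑ p, pd p u z * ξ p) y :=
    DifferentiableAt.fun_sum (fun q _ => (hdu q).mul_const _)
  have d2 : DifferentiableAt ℝ (fun z : Fin n → ℝ => ∑ q, v q * z q) y :=
    DifferentiableAt.fun_sum (fun p _ => hvp p)
  show pd k (fun z => (1/2) * ((∑ p, pd p u z * ξ p) + ∑ q, v q * z q)) y = _
  rw [pd_const_mul (d1.fun_add d2), pd_add d1 d2]
  congr 1
  congr 1
  · rw [pd_sum (fun q _ => (hdu q).mul_const _) k]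
    apply Finset.sum_congr rfl; intro q _
    rw [pd_mul_const (hdu q) (ξ q)]
    rfl
  · rw [pd_sum (f := fun q (z : Fin n → ℝ) => v q * z q) (fun q _ => hvp q) k]
    have hterm : ∀ q : Fin n, pd k (fun z : Fin n → ℝ => v q * z q) y
        = v q * (if q = k then 1 else 0) := by
      intro q
      rw [pd_const_mul (hproj q), pd_coord]
    rw [Finset.sum_congr rfl (fun q _ => hterm q)]
    simp

lemma pd2_weight (hN : IsOpen N) (hu : ContDiffOn ℝ (⊤ : ℕ∞) u N) {ξ v : Fin n → ℝ}
    (hx : x ∈ N) (i j : Fin n) :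
    pd i (pd j (weight u ξ v)) x = (1/2) * ∑ p, d3 u i j p x * ξ p := by
  have h1 : pd i (pd j (weight u ξ v)) x
      = pd i (fun y => (1/2) * ((∑ p, hessian u y j p * ξ p) + v j)) x :=
    pd_congr hN hx (fun y hy => pd_weight hN hu hy j) i
  have hdh : ∀ a b : Fin n, DifferentiableAt ℝ (fun y => hessian u y a b) x :=
    fun a b => diffAt hN (cd_hess hN hu a b) hx
  have d1 : DifferentiableAt ℝ (fun y => ∑ p, hessian u y j p * ξ p) x :=
    DifferentiableAt.fun_sum (fun p _ => (hdh j p).mul_const _)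
  rw [h1, pd_const_mul (d1.fun_add (differentiableAt_const _)),
     pd_add d1 (differentiableAt_const _), pd_const,
     pd_sum (fun p _ => (hdh j p).mul_const _) i]
  congr 1
  rw [add_zero]
  apply Finset.sum_congr rfl; intro p _
  rw [pd_mul_const (hdh j p) (ξ p)]
  rfl

end Aux5

section Alg
lemma sum3' {M : Type*} [AddCommMonoid M] (f : Fin n → Fin n → Fin n → M) :
    (∑ a, ∑ b, ∑ c, f a b c)
      = ∑ t : Fin n × Fin n × Fin n, f t.1 t.2.1 t.2.2 := by
  simp [Fintype.sum_prod_type]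

lemma sum4' {M : Type*} [AddCommMonoid M] (f : Fin n → Fin n → Fin n → Fin n → M) :
    (∑ a, ∑ b, ∑ c, ∑ d, f a b c d)
      = ∑ t : Fin n × Fin n × Fin n × Fin n, f t.1 t.2.1 t.2.2.1 t.2.2.2 := by
  simp [Fintype.sum_prod_type]

lemma sum5' {M : Type*} [AddCommMonoid M] (f : Fin n → Fin n → Fin n → Fin n → Fin n → M) :
    (∑ a, ∑ b, ∑ c, ∑ d, ∑ e, f a b c d e)
      = ∑ t : Fin n × Fin n × Fin n × Fin n × Fin n,
          f t.1 t.2.1 t.2.2.1 t.2.2.2.1 t.2.2.2.2 := by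
  simp [Fintype.sum_prod_type]

lemma sum6' {M : Type*} [AddCommMonoid M] (f : Fin n → Fin n → Fin n → Fin n → Fin n → Fin n → M) :
    (∑ a, ∑ b, ∑ c, ∑ d, ∑ e, ∑ g, f a b c d e g)
      = ∑ t : Fin n × Fin n × Fin n × Fin n × Fin n × Fin n,
          f t.1 t.2.1 t.2.2.1 t.2.2.2.1 t.2.2.2.2.1 t.2.2.2.2.2 := by
  simp [Fintype.sum_prod_type]

set_option maxHeartbeats 2000000 in
lemma algebra_main (G gm : Matrix (Fin n) (Fin n) ℝ)
    (S3 : Fin n → Fin n → Fin n → ℝ) (S4 : Fin n → Fin n → Fin n → Fin n → ℝ)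
    (ξ v : Fin n → ℝ)
    (hGs : ∀ i j, G i j = G j i)
    (hGg : ∀ i j, (∑ l, G i l * gm l j) = if i = j then (1:ℝ) else 0)
    (h3a : ∀ i j k, S3 i j k = S3 j i k) (h3b : ∀ i j k, S3 i j k = S3 i k j)
    (h4a : ∀ i j k l, S4 i j k l = S4 j i k l) (h4b : ∀ i j k l, S4 i j k l = S4 i k j l)
    (htr : ∀ l, (∑ a, ∑ b, G a b * S3 a b l) = -v l + ∑ q, gm l q * ξ q) :
    (∑ i, ∑ j, G i j *
      (((∑ k, (1/2) * ∑ l, ((-∑ a, ∑ b, G k a * S3 k a b * G b l) * S3 i j l + G k l * S4 k i j l))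
        - (∑ k, (1/2) * ∑ l, ((-∑ a, ∑ b, G k a * S3 j a b * G b l) * S3 i k l + G k l * S4 j i k l))
        + (∑ k, ∑ p, ((1/2) * ∑ l, G k l * S3 k p l) * ((1/2) * ∑ l, G p l * S3 i j l))
        - (∑ k, ∑ p, ((1/2) * ∑ l, G k l * S3 j p l) * ((1/2) * ∑ l, G p l * S3 i k l)))
       + ((1/2) * (∑ p, S3 i j p * ξ p)
          - ∑ k, ((1/2) * ∑ l, G k l * S3 i j l) * ((1/2) * ((∑ p, gm k p * ξ p) + v k)))))
    = (1/4) * ∑ i, ∑ j, ∑ k, ∑ p, ∑ q, ∑ r,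
        G i p * G j q * G k r * S3 i j k * S3 p q r := by
  -- canonical quantities
  set X : ℝ := ∑ l, ∑ b, ∑ a, ∑ c, ∑ d, ∑ e,
      G a c * S3 a c l * (G b l * (G d e * S3 d e b)) with hXdef
  set Y : ℝ := ∑ i, ∑ j, ∑ k, ∑ p, ∑ q, ∑ r,
      G i p * G j q * G k r * S3 i j k * S3 p q r with hYdef
  set W : ℝ := ∑ i, ∑ j, ∑ k, ∑ l, G i j * (G k l * S4 i j k l) with hWdef
  set Tx : ℝ := ∑ l, ∑ a, ∑ b, G a b * S3 a b l * ξ l with hTxdef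
  set TGv : ℝ := ∑ l, ∑ k, ∑ a, ∑ b, G a b * S3 a b l * (G k l * v k) with hTGvdef
  have hF1 : (∑ i, ∑ j, ∑ k, ∑ l, ∑ a, ∑ b,
      G i j * (1 / 2 * (G k a * S3 k a b * G b l * S3 i j l))) = (1/2) * X := by
    rw [hXdef]
    simp only [Finset.mul_sum]
    rw [sum6', sum6']
    apply Fintype.sum_equiv
      ⟨fun t => (t.2.2.2.2.2, t.2.2.2.1, t.2.2.1, t.2.2.2.2.1, t.1, t.2.1),
       fun t => (t.2.2.2.2.1, t.2.2.2.2.2, t.2.2.1, t.2.1, t.2.2.2.1, t.1),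
       fun t => rfl, fun t => rfl⟩
    rintro ⟨i, j, k, l, a, b⟩
    simp only [Equiv.coe_fn_mk]
    rw [hGs b l]
    ring
  have hF2 : (∑ i, ∑ j, ∑ k, ∑ l, G i j * (1 / 2 * (G k l * S4 k i j l))) = (1/2) * W := by
    rw [hWdef]
    simp only [Finset.mul_sum]
    rw [sum4', sum4']
    apply Fintype.sum_congr
    rintro ⟨i, j, k, l⟩
    rw [h4a k i j l, h4b i k j l]
    ring
  have hF3 : (∑ i, ∑ j, ∑ k, ∑ l, ∑ a, ∑ b,
      G i j * (1 / 2 * (G k a * S3 j a b * G b l * S3 i k l))) = (1/2) * Y := by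
    rw [hYdef]
    simp only [Finset.mul_sum]
    rw [sum6', sum6']
    apply Fintype.sum_equiv
      ⟨fun t => (t.1, t.2.2.1, t.2.2.2.1, t.2.1, t.2.2.2.2.1, t.2.2.2.2.2),
       fun t => (t.1, t.2.2.2.1, t.2.1, t.2.2.1, t.2.2.2.2.1, t.2.2.2.2.2),
       fun t => rfl, fun t => rfl⟩
    rintro ⟨i, j, k, l, a, b⟩
    simp only [Equiv.coe_fn_mk]
    rw [hGs b l]
    ring
  have hF4 : (∑ i, ∑ j, ∑ k, ∑ l, G i j * (1 / 2 * (G k l * S4 j i k l))) = (1/2) * W := by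
    rw [hWdef]
    simp only [Finset.mul_sum]
    rw [sum4', sum4']
    apply Fintype.sum_congr
    rintro ⟨i, j, k, l⟩
    rw [h4a j i k l]
    ring
  have hF5 : (∑ i, ∑ j, ∑ k, ∑ p, ∑ l, ∑ b,
      G i j * (1 / 2 * (G k b * S3 k p b) * (1 / 2 * (G p l * S3 i j l)))) = (1/4) * X := by
    rw [hXdef]
    simp only [Finset.mul_sum]
    rw [sum6', sum6']
    apply Fintype.sum_equiv
      ⟨fun t => (t.2.2.2.1, t.2.2.2.2.1, t.2.2.1, t.2.2.2.2.2, t.1, t.2.1),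
       fun t => (t.2.2.2.2.1, t.2.2.2.2.2, t.2.2.1, t.1, t.2.1, t.2.2.2.1),
       fun t => rfl, fun t => rfl⟩
    rintro ⟨i, j, k, p, l, b⟩
    simp only [Equiv.coe_fn_mk]
    rw [h3b k p b, hGs p l]
    ring
  have hF6 : (∑ i, ∑ j, ∑ k, ∑ p, ∑ l, ∑ b,
      G i j * (1 / 2 * (G k b * S3 j p b) * (1 / 2 * (G p l * S3 i k l)))) = (1/4) * Y := by
    rw [hYdef]
    simp only [Finset.mul_sum]
    rw [sum6', sum6']
    apply Fintype.sum_equiv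
      ⟨fun t => (t.1, t.2.2.1, t.2.2.2.2.1, t.2.1, t.2.2.2.2.2, t.2.2.2.1),
       fun t => (t.1, t.2.2.2.1, t.2.1, t.2.2.2.2.2, t.2.2.1, t.2.2.2.2.1),
       fun t => rfl, fun t => rfl⟩
    rintro ⟨i, j, k, p, l, b⟩
    simp only [Equiv.coe_fn_mk]
    rw [h3b j p b, hGs p l]
    ring
  have hF7 : (∑ i, ∑ j, ∑ p, G i j * (1 / 2 * (S3 i j p * ξ p))) = (1/2) * Tx := by
    rw [hTxdef]
    simp only [Finset.mul_sum]
    rw [sum3', sum3']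
    apply Fintype.sum_equiv
      ⟨fun t => (t.2.2, t.1, t.2.1), fun t => (t.2.1, t.2.2, t.1),
       fun t => rfl, fun t => rfl⟩
    rintro ⟨i, j, p⟩
    simp only [Equiv.coe_fn_mk]
    ring
  have hF8 : (∑ i, ∑ j, ∑ k, ∑ p, ∑ l,
      G i j * (1 / 2 * (G k l * S3 i j l) * (1 / 2 * (gm k p * ξ p)))) = (1/4) * Tx := by
    have step1 : (∑ i, ∑ j, ∑ k, ∑ p, ∑ l,
        G i j * (1 / 2 * (G k l * S3 i j l) * (1 / 2 * (gm k p * ξ p))))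
        = ∑ i, ∑ j, ∑ l, ∑ p, (1/4 * (G i j * S3 i j l * ξ p)) * (∑ k, G l k * gm k p) := by
      simp only [Finset.mul_sum]
      rw [sum5', sum5']
      apply Fintype.sum_equiv
        ⟨fun t => (t.1, t.2.1, t.2.2.2.2, t.2.2.2.1, t.2.2.1),
         fun t => (t.1, t.2.1, t.2.2.2.2, t.2.2.2.1, t.2.2.1),
         fun t => rfl, fun t => rfl⟩
      rintro ⟨i, j, k, p, l⟩
      simp only [Equiv.coe_fn_mk]
      rw [hGs k l]
      ring
    rw [step1]
    have step2 : (∑ i, ∑ j, ∑ l, ∑ p, (1/4 * (G i j * S3 i j l * ξ p)) * (∑ k, G l k * gm k p))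
        = ∑ i, ∑ j, ∑ l, 1/4 * (G i j * S3 i j l * ξ l) := by
      apply Finset.sum_congr rfl; intro i _
      apply Finset.sum_congr rfl; intro j _
      apply Finset.sum_congr rfl; intro l _
      rw [Finset.sum_congr rfl (fun p _ => by rw [hGg l p])]
      simp [mul_ite, Finset.sum_ite_eq]
    rw [step2, hTxdef]
    simp only [Finset.mul_sum]
    rw [sum3', sum3']
    apply Fintype.sum_equiv
      ⟨fun t => (t.2.2, t.1, t.2.1), fun t => (t.2.1, t.2.2, t.1),
       fun t => rfl, fun t => rfl⟩
    rintro ⟨i, j, l⟩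
    simp only [Equiv.coe_fn_mk]
  have hF9 : (∑ i, ∑ j, ∑ k, ∑ l,
      G i j * (1 / 2 * (G k l * S3 i j l) * (1 / 2 * v k))) = (1/4) * TGv := by
    rw [hTGvdef]
    simp only [Finset.mul_sum]
    rw [sum4', sum4']
    apply Fintype.sum_equiv
      ⟨fun t => (t.2.2.2, t.2.2.1, t.1, t.2.1),
       fun t => (t.2.2.1, t.2.2.2, t.2.1, t.1),
       fun t => rfl, fun t => rfl⟩
    rintro ⟨i, j, k, l⟩
    simp only [Equiv.coe_fn_mk]
    ring
  have hX : X = Tx - TGv := by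
    have hfold : X = ∑ l, ∑ b, (∑ a, ∑ c, G a c * S3 a c l)
        * (G b l * (-v b + ∑ q, gm b q * ξ q)) := by
      rw [hXdef]
      apply Finset.sum_congr rfl; intro l _
      apply Finset.sum_congr rfl; intro b _
      rw [← htr b]
      simp only [Finset.mul_sum, Finset.sum_mul]
      rw [sum4', sum4']
      apply Fintype.sum_equiv
        ⟨fun t => (t.2.2.1, t.2.2.2, t.1, t.2.1), fun t => (t.2.2.1, t.2.2.2, t.1, t.2.1),
         fun t => rfl, fun t => rfl⟩
      rintro ⟨a, c, d, e⟩
      simp only [Equiv.coe_fn_mk]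
    rw [hfold]
    simp only [Finset.mul_sum, Finset.sum_mul, mul_add, add_mul, mul_neg, neg_mul,
      Finset.sum_add_distrib, Finset.sum_neg_distrib]
    have sub2 : (∑ l, ∑ b, ∑ q, ∑ a, ∑ c, G a c * S3 a c l * (G b l * (gm b q * ξ q)))
        = Tx := by
      have s1 : (∑ l, ∑ b, ∑ q, ∑ a, ∑ c, G a c * S3 a c l * (G b l * (gm b q * ξ q)))
          = ∑ l, ∑ a, ∑ c, ∑ q, (G a c * S3 a c l * ξ q) * (∑ b, G l b * gm b q) := by
        simp only [Finset.mul_sum]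
        rw [sum5', sum5']
        apply Fintype.sum_equiv
          ⟨fun t => (t.1, t.2.2.2.1, t.2.2.2.2, t.2.2.1, t.2.1),
           fun t => (t.1, t.2.2.2.2, t.2.2.2.1, t.2.1, t.2.2.1),
           fun t => rfl, fun t => rfl⟩
        rintro ⟨l, b, q, a, c⟩
        simp only [Equiv.coe_fn_mk]
        rw [hGs b l]
        ring
      rw [s1, hTxdef]
      apply Finset.sum_congr rfl; intro l _
      apply Finset.sum_congr rfl; intro a _
      apply Finset.sum_congr rfl; intro c _
      rw [Finset.sum_congr rfl (fun q _ => by rw [hGg l q])]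
      simp [mul_ite, Finset.sum_ite_eq]
    rw [sub2, ← hTGvdef]
    ring
  simp only [Finset.mul_sum, Finset.sum_mul, mul_add, add_mul, mul_sub, sub_mul, mul_neg, neg_mul,
    Finset.sum_add_distrib, Finset.sum_sub_distrib, Finset.sum_neg_distrib]
  linarith [hF1, hF2, hF3, hF4, hF5, hF6, hF7, hF8, hF9, hX]

end Alg





theorem bakry_emery_trace {n : ℕ} (hn : 1 ≤ n) (N : Set (Fin n → ℝ)) (hNopen : IsOpen N)
    (hNne : N.Nonempty) (u : (Fin n → ℝ) → ℝ) (hu : ContDiffOn ℝ (⊤ : ℕ∞) u N)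
    (hpos : ∀ x ∈ N, (hessian u x).PosDef)
    (v ξ : Fin n → ℝ) (c : ℝ) (hMA : MAeq u N v ξ c) :
    ∀ x ∈ N,
      (∑ i, ∑ j, ginv u x i j * ricciPhi u (weight u ξ v) i j x) = (1/4) * norm3 u x ∧
      scalarCurv u x + laplacian u (weight u ξ v) x = (1/4) * norm3 u x := by
  intro x hx
  have halg := algebra_main (ginv u x) (hessian u x)
    (fun a b c' => d3 u a b c' x) (fun a b c' d => d4 u a b c' d x) ξ v
    (fun i j => ginv_symm hNopen hu hx i j)
    (fun i j => ginv_mul_hess hpos hx i j)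
    (fun i j k => d3_swap12 hNopen hu hx i j k)
    (fun i j k => d3_swap23 hNopen hu hx i j k)
    (fun i j k l => d4_swap12 hNopen hu hx i j k l)
    (fun i j k l => d4_swap23 hNopen hu hx i j k l)
    (fun l => trace_rel hNopen hu hpos hMA hx l)
  have key : (∑ i, ∑ j, ginv u x i j * ricciPhi u (weight u ξ v) i j x)
      = (1/4) * norm3 u x := by
    have hpt : ∀ i j : Fin n, ricciPhi u (weight u ξ v) i j x =
        (((∑ k, (1/2) * ∑ l, ((-∑ a, ∑ b, ginv u x k a * d3 u k a b x * ginv u x b l)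
              * d3 u i j l x + ginv u x k l * d4 u k i j l x))
          - (∑ k, (1/2) * ∑ l, ((-∑ a, ∑ b, ginv u x k a * d3 u j a b x * ginv u x b l)
              * d3 u i k l x + ginv u x k l * d4 u j i k l x))
          + (∑ k, ∑ p, ((1/2) * ∑ l, ginv u x k l * d3 u k p l x)
              * ((1/2) * ∑ l, ginv u x p l * d3 u i j l x))
          - (∑ k, ∑ p, ((1/2) * ∑ l, ginv u x k l * d3 u j p l x)
              * ((1/2) * ∑ l, ginv u x p l * d3 u i k l x)))
         + ((1/2) * (∑ p, d3 u i j p x * ξ p)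
            - ∑ k, ((1/2) * ∑ l, ginv u x k l * d3 u i j l x)
                * ((1/2) * ((∑ p, hessian u x k p * ξ p) + v k)))) := by
      intro i j
      have hric : Ricci u i j x =
          ((∑ k, (1/2) * ∑ l, ((-∑ a, ∑ b, ginv u x k a * d3 u k a b x * ginv u x b l)
              * d3 u i j l x + ginv u x k l * d4 u k i j l x))
          - (∑ k, (1/2) * ∑ l, ((-∑ a, ∑ b, ginv u x k a * d3 u j a b x * ginv u x b l)
              * d3 u i k l x + ginv u x k l * d4 u j i k l x))
          + (∑ k, ∑ p, ((1/2) * ∑ l, ginv u x k l * d3 u k p l x)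
              * ((1/2) * ∑ l, ginv u x p l * d3 u i j l x))
          - (∑ k, ∑ p, ((1/2) * ∑ l, ginv u x k l * d3 u j p l x)
              * ((1/2) * ∑ l, ginv u x p l * d3 u i k l x))) := by
        show (∑ k, pd k (Christoffel u k i j) x) - (∑ k, pd j (Christoffel u k i k) x)
            + (∑ k, ∑ p, Christoffel u k k p x * Christoffel u p i j x)
            - (∑ k, ∑ p, Christoffel u k j p x * Christoffel u p i k x) = _
        have hval3 : ∀ k p : Fin n, Christoffel u k k p x * Christoffel u p i j x
            = ((1/2) * ∑ l, ginv u x k l * d3 u k p l x)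
              * ((1/2) * ∑ l, ginv u x p l * d3 u i j l x) := fun k p => by
          rw [christoffel_val hNopen hu hx k k p, christoffel_val hNopen hu hx p i j]
        have hval4 : ∀ k p : Fin n, Christoffel u k j p x * Christoffel u p i k x
            = ((1/2) * ∑ l, ginv u x k l * d3 u j p l x)
              * ((1/2) * ∑ l, ginv u x p l * d3 u i k l x) := fun k p => by
          rw [christoffel_val hNopen hu hx k j p, christoffel_val hNopen hu hx p i k]
        rw [Finset.sum_congr rfl (fun k _ => pd_christoffel hNopen hu hpos hx k k i j),
          Finset.sum_congr rfl (fun k _ => pd_christoffel hNopen hu hpos hx j k i k),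
          Finset.sum_congr rfl (fun k _ => Finset.sum_congr rfl (fun p _ => hval3 k p)),
          Finset.sum_congr rfl (fun k _ => Finset.sum_congr rfl (fun p _ => hval4 k p))]
      have hcov : covHess u (weight u ξ v) i j x =
          ((1/2) * (∑ p, d3 u i j p x * ξ p)
            - ∑ k, ((1/2) * ∑ l, ginv u x k l * d3 u i j l x)
                * ((1/2) * ((∑ p, hessian u x k p * ξ p) + v k))) := by
        show pd i (pd j (weight u ξ v)) x
            - (∑ k, Christoffel u k i j x * pd k (weight u ξ v) x) = _
        have hval6 : ∀ k : Fin n, Christoffel u k i j x * pd k (weight u ξ v) x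
            = ((1/2) * ∑ l, ginv u x k l * d3 u i j l x)
              * ((1/2) * ((∑ p, hessian u x k p * ξ p) + v k)) := fun k => by
          rw [christoffel_val hNopen hu hx k i j, pd_weight hNopen hu hx k]
        rw [pd2_weight hNopen hu hx i j,
          Finset.sum_congr rfl (fun k _ => hval6 k)]
      show Ricci u i j x + covHess u (weight u ξ v) i j x = _
      rw [hric, hcov]
    calc (∑ i, ∑ j, ginv u x i j * ricciPhi u (weight u ξ v) i j x)
        = ∑ i, ∑ j, ginv u x i j *
          (((∑ k, (1/2) * ∑ l, ((-∑ a, ∑ b, ginv u x k a * d3 u k a b x * ginv u x b l)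
                * d3 u i j l x + ginv u x k l * d4 u k i j l x))
            - (∑ k, (1/2) * ∑ l, ((-∑ a, ∑ b, ginv u x k a * d3 u j a b x * ginv u x b l)
                * d3 u i k l x + ginv u x k l * d4 u j i k l x))
            + (∑ k, ∑ p, ((1/2) * ∑ l, ginv u x k l * d3 u k p l x)
                * ((1/2) * ∑ l, ginv u x p l * d3 u i j l x))
            - (∑ k, ∑ p, ((1/2) * ∑ l, ginv u x k l * d3 u j p l x)
                * ((1/2) * ∑ l, ginv u x p l * d3 u i k l x)))
           + ((1/2) * (∑ p, d3 u i j p x * ξ p)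
              - ∑ k, ((1/2) * ∑ l, ginv u x k l * d3 u i j l x)
                  * ((1/2) * ((∑ p, hessian u x k p * ξ p) + v k)))) := by
          apply Finset.sum_congr rfl; intro i _
          apply Finset.sum_congr rfl; intro j _
          rw [hpt i j]
      _ = (1/4) * ∑ i, ∑ j, ∑ k, ∑ p, ∑ q, ∑ r,
            ginv u x i p * ginv u x j q * ginv u x k r * d3 u i j k x * d3 u p q r x :=
          halg
      _ = (1/4) * norm3 u x := rfl
  refine ⟨key, ?_⟩
  have hsplit : (∑ i, ∑ j, ginv u x i j * ricciPhi u (weight u ξ v) i j x)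
      = scalarCurv u x + laplacian u (weight u ξ v) x := by
    show (∑ i, ∑ j, ginv u x i j
        * (Ricci u i j x + covHess u (weight u ξ v) i j x)) = _
    simp only [mul_add, Finset.sum_add_distrib]
    rfl
  rw [← hsplit, key]


end KRS
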